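/- Consider a perturbed discrete-time stochastic control system. Suppose there exist a barrier certificate candidate B : ℝⁿ → ℝ and constants λ > ε ≥ 0 and c ≥ 0 such that: (i) B(s) ≥ 0 for all s ∈ S; (ii) B(s) ≤ ε for all s ∈ S₀; (iii) B(s) ≥ λ for all s ∈ S_u; and (iv) ∫ B(g(s,δ)) dμ(δ) − B(s) ≤ c for all s ∈ S. Then for every finite time horizon T ∈ ℕ and every initial state s₀ ∈ S₀, the safety probability over the horizon T is bounded below by a linear bound: ℙ_{s₀}[ traj(s₀,ω)(t) ∉ S_u for all t ≤ T ] ≥ 1 − (B(s₀) + c·T)/λ. -/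

import Mathlib

open MeasureTheory

def traj {n : ℕ} (g : (Fin n → ℝ) → (Fin n → ℝ) → (Fin n → ℝ))
    (s₀ : Fin n → ℝ) (ω : ℕ → Fin n → ℝ) : ℕ → Fin n → ℝ
  | 0 => s₀
  | t + 1 => g (traj g s₀ ω t) (ω t)

/-!
Write `V_T(s)` for the probability that the trajectory from `s` meets `S_u` within `T` steps.
For `s ∈ S_u`, `V_T(s) ≤ 1 ≤ B(s)/λ`. For `s ∉ S_u`, conditioning on the first noise gives
`V_{T+1}(s) = ∫ V_T(g s δ) dμ(δ)`, and since `g s δ ∈ S` for `μ`-a.e. `δ` (the support of `μ` is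
conull), the drift condition `∫ B(g s δ) dμ ≤ B(s) + c` propagates `V_T ≤ (B + cT)/λ` on `S`
from `T` to `T + 1`. The event only involves the first `T` noises, so `V_T` is computed under
the finite product `μ^T`, the image of `P` under restriction; there a noise tuple is turned
into a sequence by padding with zeros, which the trajectory up to time `T` never reads.
-/

open Set

section Trajectory

variable {n : ℕ} {g : (Fin n → ℝ) → (Fin n → ℝ) → (Fin n → ℝ)}

theorem traj_succ_eq_traj_shift (s : Fin n → ℝ) (ω : ℕ → Fin n → ℝ) (t : ℕ) :
    traj g s ω (t + 1) = traj g (g s (ω 0)) (fun k => ω (k + 1)) t := by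
  induction t with
  | zero => rfl
  | succ t ih => exact congrArg (g · (ω (t + 1))) ih

theorem traj_congr {s : Fin n → ℝ} {ω ω' : ℕ → Fin n → ℝ} {t : ℕ}
    (h : ∀ k < t, ω k = ω' k) : traj g s ω t = traj g s ω' t := by
  induction t with
  | zero => rfl
  | succ t ih =>
    simp only [traj]
    rw [ih fun k hk => h k (by omega), h t t.lt_succ_self]

theorem measurable_traj (hg : Measurable (Function.uncurry g)) (t : ℕ) :
    Measurable fun p : (Fin n → ℝ) × (ℕ → Fin n → ℝ) => traj g p.1 p.2 t := by
  induction t with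
  | zero => exact measurable_fst
  | succ t ih => exact hg.comp (ih.prodMk ((measurable_pi_apply t).comp measurable_snd))

def hitsWithin (g : (Fin n → ℝ) → (Fin n → ℝ) → (Fin n → ℝ)) (U : Set (Fin n → ℝ)) (T : ℕ)
    (s : Fin n → ℝ) : Set (ℕ → Fin n → ℝ) :=
  {ω | ∃ t ≤ T, traj g s ω t ∈ U}

variable {U : Set (Fin n → ℝ)} {s : Fin n → ℝ} {ω : ℕ → Fin n → ℝ}

theorem mem_hitsWithin_zero : ω ∈ hitsWithin g U 0 s ↔ s ∈ U := by
  simp [hitsWithin, traj]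

theorem mem_hitsWithin_succ {T : ℕ} :
    ω ∈ hitsWithin g U (T + 1) s ↔
      s ∈ U ∨ (fun k => ω (k + 1)) ∈ hitsWithin g U T (g s (ω 0)) := by
  simp only [hitsWithin, mem_ofPred_eq, ← traj_succ_eq_traj_shift]
  constructor
  · rintro ⟨_ | t, ht, hmem⟩
    · exact .inl hmem
    · exact .inr ⟨t, by omega, hmem⟩
  · rintro (hs | ⟨t, ht, hmem⟩)
    · exact ⟨0, by omega, hs⟩
    · exact ⟨t + 1, by omega, hmem⟩

theorem measurableSet_hitsWithin (hg : Measurable (Function.uncurry g)) (hU : MeasurableSet U)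
    (T : ℕ) : MeasurableSet {p : (Fin n → ℝ) × (ℕ → Fin n → ℝ) | p.2 ∈ hitsWithin g U T p.1} := by
  have : {p : (Fin n → ℝ) × (ℕ → Fin n → ℝ) | p.2 ∈ hitsWithin g U T p.1} =
      ⋃ t, ⋃ (_ : t ≤ T), (fun p => traj g p.1 p.2 t) ⁻¹' U := by
    ext; simp [hitsWithin]
  rw [this]
  exact .iUnion fun t => .iUnion fun _ => measurable_traj hg t hU

end Trajectory

section Padding

variable {X : Type*} [Zero X]

def padNoise (T : ℕ) (x : Fin T → X) : ℕ → X :=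
  fun k => if h : k < T then x ⟨k, h⟩ else 0

theorem measurable_padNoise [MeasurableSpace X] (T : ℕ) : Measurable (padNoise (X := X) T) :=
  measurable_pi_lambda _ fun k => by
    unfold padNoise
    split
    · exact measurable_pi_apply _
    · exact measurable_const

theorem padNoise_succ_zero {T : ℕ} (x : Fin (T + 1) → X) : padNoise (T + 1) x 0 = x 0 :=
  dif_pos T.succ_pos

theorem padNoise_succ_shift {T : ℕ} (x : Fin (T + 1) → X) :
    (fun k => padNoise (T + 1) x (k + 1)) = padNoise T (Fin.tail x) := by
  funext k
  by_cases h : k < T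
  · simp [padNoise, h, Fin.tail]
  · simp [padNoise, h]

theorem padNoise_restrict_of_lt {T k : ℕ} (ω : ℕ → X) (h : k < T) :
    padNoise T (fun i : Fin T => ω i) k = ω k :=
  dif_pos h

end Padding

theorem restrict_preimage_padNoise_hitsWithin {n : ℕ}
    (g : (Fin n → ℝ) → (Fin n → ℝ) → (Fin n → ℝ)) (U : Set (Fin n → ℝ)) (T : ℕ)
    (s : Fin n → ℝ) :
    (fun ω (i : Fin T) => ω i) ⁻¹' (padNoise T ⁻¹' hitsWithin g U T s) = hitsWithin g U T s := by
  ext ω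
  simp only [hitsWithin, mem_preimage, mem_ofPred_eq]
  refine exists_congr fun t => and_congr_right fun ht => ?_
  rw [traj_congr fun k hk => padNoise_restrict_of_lt ω (hk.trans_le ht)]

theorem map_restrict_eq_pi {X : Type*} [MeasurableSpace X] {μ : Measure X} [SigmaFinite μ]
    {P : Measure (ℕ → X)} {T : ℕ}
    (hP : ∀ A : Fin T → Set X, (∀ i, MeasurableSet (A i)) →
      P {ω | ∀ i : Fin T, ω i ∈ A i} = ∏ i, μ (A i)) :
    P.map (fun ω (i : Fin T) => ω i) = Measure.pi fun _ => μ := by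
  have hmeas : Measurable fun ω : ℕ → X => fun i : Fin T => ω i :=
    measurable_pi_lambda _ fun i => measurable_pi_apply _
  refine (Measure.pi_eq fun A hA => ?_).symm
  rw [Measure.map_apply hmeas (.univ_pi hA), ← hP A hA]
  congr 1
  ext ω
  simp

theorem measure_hitsWithin_eq_pi {n : ℕ} {g : (Fin n → ℝ) → (Fin n → ℝ) → (Fin n → ℝ)}
    {U : Set (Fin n → ℝ)} {μ : Measure (Fin n → ℝ)} [SigmaFinite μ] {P : Measure (ℕ → Fin n → ℝ)}
    {T : ℕ} (hg : Measurable (Function.uncurry g)) (hU : MeasurableSet U)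
    (hP : ∀ A : Fin T → Set (Fin n → ℝ), (∀ i, MeasurableSet (A i)) →
      P {ω | ∀ i : Fin T, ω i ∈ A i} = ∏ i, μ (A i)) (s : Fin n → ℝ) :
    P (hitsWithin g U T s) = Measure.pi (fun _ => μ) (padNoise T ⁻¹' hitsWithin g U T s) := by
  have hpad : MeasurableSet (padNoise T ⁻¹' hitsWithin g U T s) :=
    measurableSet_hitsWithin hg hU T |>.preimage
      (measurable_const.prodMk (measurable_padNoise T))
  rw [← map_restrict_eq_pi hP, Measure.map_apply (by fun_prop) hpad,
    restrict_preimage_padNoise_hitsWithin]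

section Barrier

variable {n : ℕ} {g : (Fin n → ℝ) → (Fin n → ℝ) → (Fin n → ℝ)} {U : Set (Fin n → ℝ)}
  {μ : Measure (Fin n → ℝ)}

theorem pi_padNoise_hitsWithin_succ [SigmaFinite μ] (hg : Measurable (Function.uncurry g))
    (hU : MeasurableSet U) {s : Fin n → ℝ} (hs : s ∉ U) (T : ℕ) :
    Measure.pi (fun _ : Fin (T + 1) => μ) (padNoise (T + 1) ⁻¹' hitsWithin g U (T + 1) s) =
      ∫⁻ a, Measure.pi (fun _ : Fin T => μ) (padNoise T ⁻¹' hitsWithin g U T (g s a)) ∂μ := by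
  set F : Set ((Fin n → ℝ) × (Fin T → Fin n → ℝ)) :=
    {p | padNoise T p.2 ∈ hitsWithin g U T (g s p.1)}
  have hF : MeasurableSet F :=
    (hg.comp (measurable_const.prodMk measurable_fst)).prodMk
      ((measurable_padNoise T).comp measurable_snd) (measurableSet_hitsWithin hg hU T)
  have hpre : padNoise (T + 1) ⁻¹' hitsWithin g U (T + 1) s =
      MeasurableEquiv.piFinSuccAbove (fun _ => Fin n → ℝ) 0 ⁻¹' F := by
    ext x
    simp [F, mem_hitsWithin_succ, hs, padNoise_succ_zero, padNoise_succ_shift]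
  rw [hpre, (measurePreserving_piFinSuccAbove (fun _ => μ) 0).measure_preimage
    hF.nullMeasurableSet, Measure.prod_apply hF]
  rfl

theorem pi_padNoise_hitsWithin_le [IsProbabilityMeasure μ] (hg : Measurable (Function.uncurry g))
    (hU : MeasurableSet U) {S : Set (Fin n → ℝ)} (hgS : ∀ s ∈ S, ∀ᵐ δ ∂μ, g s δ ∈ S)
    {B : (Fin n → ℝ) → ℝ} (hint : ∀ s ∈ S, Integrable (fun δ => B (g s δ)) μ)
    {lam c : ℝ} (hlam : 0 < lam) (hc : 0 ≤ c) (hnonneg : ∀ s ∈ S, 0 ≤ B s)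
    (hunsafe : ∀ s ∈ U, lam ≤ B s) (hdec : ∀ s ∈ S, ∫ δ, B (g s δ) ∂μ - B s ≤ c) (T : ℕ) :
    ∀ s ∈ S, Measure.pi (fun _ : Fin T => μ) (padNoise T ⁻¹' hitsWithin g U T s) ≤
      ENNReal.ofReal ((B s + c * T) / lam) := by
  induction T with
  | zero => ?_
  | succ T ih => ?_
  all_goals
    intro s hs
    by_cases hsU : s ∈ U
    · refine prob_le_one.trans (ENNReal.one_le_ofReal.2 ?_)
      rw [one_le_div hlam]
      nlinarith [hunsafe s hsU]
  · rw [eq_empty_of_forall_notMem fun x => mem_hitsWithin_zero.not.2 hsU, preimage_empty,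
      measure_empty]
    exact zero_le
  calc Measure.pi (fun _ : Fin (T + 1) => μ) (padNoise (T + 1) ⁻¹' hitsWithin g U (T + 1) s)
      = ∫⁻ a, Measure.pi (fun _ : Fin T => μ) (padNoise T ⁻¹' hitsWithin g U T (g s a)) ∂μ :=
        pi_padNoise_hitsWithin_succ hg hU hsU T
    _ ≤ ∫⁻ a, ENNReal.ofReal ((B (g s a) + c * T) / lam) ∂μ :=
        lintegral_mono_ae ((hgS s hs).mono fun a ha => ih _ ha)
    _ = ENNReal.ofReal (∫ a, (B (g s a) + c * T) / lam ∂μ) := by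
        refine (ofReal_integral_eq_lintegral_ofReal
          (((hint s hs).add (integrable_const _)).div_const lam) ?_).symm
        filter_upwards [hgS s hs] with a ha
        exact div_nonneg (add_nonneg (hnonneg _ ha) (by positivity)) hlam.le
    _ ≤ ENNReal.ofReal ((B s + c * (T + 1 : ℕ)) / lam) := by
        rw [integral_div]
        refine ENNReal.ofReal_le_ofReal (div_le_div_of_nonneg_right ?_ hlam.le)
        rw [integral_add (hint s hs) (integrable_const _)]
        simp only [integral_const, probReal_univ, one_smul]
        have := hdec s hs
        push_cast
        linarith

end Barrier

theorem linear_lower_bound_finite_horizon_safety_general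
    {n : ℕ} (S S₀ Su W : Set (Fin n → ℝ))
    (g : (Fin n → ℝ) → (Fin n → ℝ) → (Fin n → ℝ))
    (μ : Measure (Fin n → ℝ)) [IsProbabilityMeasure μ]
    (hSu : MeasurableSet Su)
    (hS₀S : S₀ ⊆ S)
    (hg : Measurable (Function.uncurry g))
    -- `W` is the support of the noise distribution `μ`
    (hW : W = {δ | ∀ U : Set (Fin n → ℝ), IsOpen U → δ ∈ U → 0 < μ U})
    (hgS : ∀ s ∈ S, ∀ δ ∈ W, g s δ ∈ S)
    -- `P` is the countable product measure `μ^⊗ℕ` on noise sequences,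
    -- characterized by its values on finite cylinders
    (P : Measure (ℕ → Fin n → ℝ)) [IsProbabilityMeasure P]
    (hP : ∀ (T : ℕ) (A : Fin T → Set (Fin n → ℝ)), (∀ i, MeasurableSet (A i)) →
      P {ω | ∀ i : Fin T, ω (i : ℕ) ∈ A i} = ∏ i, μ (A i))
    -- the barrier certificate candidate: a bounded Borel-measurable function
    (B : (Fin n → ℝ) → ℝ) (hBmeas : Measurable B) (hBbdd : ∃ C, ∀ s, |B s| ≤ C)
    (lam ε c : ℝ) (hε : 0 ≤ ε) (hεlam : ε < lam) (hc : 0 ≤ c)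
    (hnonneg : ∀ s ∈ S, 0 ≤ B s)
    (hunsafe : ∀ s ∈ Su, lam ≤ B s)
    (hdec : ∀ s ∈ S, ∫ δ, B (g s δ) ∂μ - B s ≤ c) :
    ∀ (T : ℕ), ∀ s₀ ∈ S₀,
      1 - (B s₀ + c * T) / lam ≤
        (P {ω | ∀ t ≤ T, traj g s₀ ω t ∉ Su}).toReal := by
  intro T s₀ hs₀
  have hlam : 0 < lam := hε.trans_lt hεlam
  have hW_ae : ∀ᵐ δ ∂μ, δ ∈ W := by
    have : W = μ.support := by
      rw [hW, Measure.support_eq_forall_isOpen]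
      ext
      exact forall_congr' fun _ => forall_comm
    exact this ▸ Measure.support_mem_ae
  obtain ⟨C, hC⟩ := hBbdd
  have hint (s : Fin n → ℝ) : Integrable (fun δ => B (g s δ)) μ :=
    .of_bound (hBmeas.comp hg.of_uncurry_left).aestronglyMeasurable C (.of_forall fun _ => hC _)
  have hhit : P (hitsWithin g Su T s₀) ≤ ENNReal.ofReal ((B s₀ + c * T) / lam) := by
    rw [measure_hitsWithin_eq_pi hg hSu (hP T)]
    exact pi_padNoise_hitsWithin_le hg hSu (fun s hs => hW_ae.mono (hgS s hs)) (fun s _ => hint s)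
      hlam hc hnonneg hunsafe hdec T s₀ (hS₀S hs₀)
  have hsafe : {ω | ∀ t ≤ T, traj g s₀ ω t ∉ Su} = (hitsWithin g Su T s₀)ᶜ := by
    ext; simp [hitsWithin]
  have hmeas : MeasurableSet (hitsWithin g Su T s₀) :=
    (measurableSet_hitsWithin hg hSu T).preimage measurable_prodMk_left
  rw [hsafe, prob_compl_eq_one_sub hmeas,
    ENNReal.toReal_sub_of_le prob_le_one ENNReal.one_ne_top, ENNReal.toReal_one]
  have := hnonneg s₀ (hS₀S hs₀)
  linarith [ENNReal.toReal_le_of_le_ofReal (by positivity) hhit]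

/-- Linear lower bound on probabilistic safety over a finite time horizon. -/
theorem linear_lower_bound_finite_horizon_safety
    {n : ℕ} (S S₀ Su W : Set (Fin n → ℝ))
    (g : (Fin n → ℝ) → (Fin n → ℝ) → (Fin n → ℝ))
    (μ : Measure (Fin n → ℝ)) [IsProbabilityMeasure μ]
    (hS : MeasurableSet S) (hS₀ : MeasurableSet S₀) (hSu : MeasurableSet Su)
    (hS₀S : S₀ ⊆ S) (hSuS : Su ⊆ S) (hdisj : S₀ ∩ Su = ∅)
    (hg : Measurable (Function.uncurry g))
    -- `W` is the support of the noise distribution `μ`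
    (hW : W = {δ | ∀ U : Set (Fin n → ℝ), IsOpen U → δ ∈ U → 0 < μ U})
    (hgS : ∀ s ∈ S, ∀ δ ∈ W, g s δ ∈ S)
    -- `P` is the countable product measure `μ^⊗ℕ` on noise sequences,
    -- characterized by its values on finite cylinders
    (P : Measure (ℕ → Fin n → ℝ)) [IsProbabilityMeasure P]
    (hP : ∀ (T : ℕ) (A : Fin T → Set (Fin n → ℝ)), (∀ i, MeasurableSet (A i)) →
      P {ω | ∀ i : Fin T, ω (i : ℕ) ∈ A i} = ∏ i, μ (A i))
    -- the barrier certificate candidate: a bounded Borel-measurable function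
    (B : (Fin n → ℝ) → ℝ) (hBmeas : Measurable B) (hBbdd : ∃ C, ∀ s, |B s| ≤ C)
    (lam ε c : ℝ) (hε : 0 ≤ ε) (hεlam : ε < lam) (hc : 0 ≤ c)
    (hnonneg : ∀ s ∈ S, 0 ≤ B s)
    (hinit : ∀ s ∈ S₀, B s ≤ ε)
    (hunsafe : ∀ s ∈ Su, lam ≤ B s)
    (hdec : ∀ s ∈ S, ∫ δ, B (g s δ) ∂μ - B s ≤ c) :
    ∀ (T : ℕ), ∀ s₀ ∈ S₀,
      1 - (B s₀ + c * T) / lam ≤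
        (P {ω | ∀ t ≤ T, traj g s₀ ω t ∉ Su}).toReal :=
  linear_lower_bound_finite_horizon_safety_general S S₀ Su W g μ hSu hS₀S hg hW hgS P hP B hBmeas
    hBbdd lam ε c hε hεlam hc hnonneg hunsafe hdec
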